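/- arXiv:1212.1903 — 2 statements merged into one kernel-verified Lean document; each statement's English description precedes it below -/
import Mathlib

section
/- Let H be a finite-dimensional inner product space, P an orthogonal projection and W a self-adjoint operator on H with P W P ≥ γ P for some γ > 0. Then trace(P) ≤ γ⁻² · trace(W P W). -/
open LinearMap
local notation "⟪" x ", " y "⟫" => @inner ℂ _ _ x y

lemma trace_onb {H : Type*} [NormedAddCommGroup H] [InnerProductSpace ℂ H]
    [FiniteDimensional ℂ H] (b : OrthonormalBasis (Fin (Module.finrank ℂ H)) ℂ H)
    (f : H →ₗ[ℂ] H) :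
    LinearMap.trace ℂ H f = ∑ i, ⟪b i, f (b i)⟫ := by
  rw [LinearMap.trace_eq_matrix_trace ℂ b.toBasis, Matrix.trace]
  congr 1; ext i
  rw [Matrix.diag_apply, LinearMap.toMatrix_apply, b.coe_toBasis_repr_apply, b.coe_toBasis,
    b.repr_apply_apply]

theorem trace_proj_le_inv_gamma_sq_mul_trace_WPW
    {H : Type*} [NormedAddCommGroup H] [InnerProductSpace ℂ H] [FiniteDimensional ℂ H]
    (P W : H →ₗ[ℂ] H) (hP : P.IsSymmetric) (hP2 : P ∘ₗ P = P) (hW : W.IsSymmetric)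
    (γ : ℝ) (hγ : 0 < γ)
    (huncert : ∀ u : H, γ * ‖P u‖ ^ 2 ≤ (⟪W (P u), P u⟫).re) :
    (LinearMap.trace ℂ H P).re ≤ γ⁻¹ ^ 2 * (LinearMap.trace ℂ H (W ∘ₗ P ∘ₗ W)).re := by
  set b := stdOrthonormalBasis ℂ H with hb
  have hPP : ∀ x : H, P (P x) = P x := fun x => congrFun (congrArg DFunLike.coe hP2) x
  have key : ∀ x : H, ⟪x, P x⟫ = ⟪P x, P x⟫ := fun x => by
    calc ⟪x, P x⟫ = ⟪x, P (P x)⟫ := by rw [hPP]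
      _ = ⟪P x, P x⟫ := (hP x (P x)).symm
  set S1 : ℝ := ∑ i, ‖P (b i)‖ ^ 2 with hS1
  set S2 : ℝ := ∑ i, ‖P (W (b i))‖ ^ 2 with hS2
  have hS1nn : 0 ≤ S1 := Finset.sum_nonneg fun i _ => sq_nonneg _
  have hS2nn : 0 ≤ S2 := Finset.sum_nonneg fun i _ => sq_nonneg _
  -- trace P = S1
  have htrP : (LinearMap.trace ℂ H P).re = S1 := by
    rw [trace_onb b P, Complex.re_sum]
    refine Finset.sum_congr rfl fun i _ => ?_
    rw [key]
    exact inner_self_eq_norm_sq (𝕜 := ℂ) _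
  -- trace WPW = S2
  have htrWPW : (LinearMap.trace ℂ H (W ∘ₗ P ∘ₗ W)).re = S2 := by
    rw [trace_onb b (W ∘ₗ P ∘ₗ W), Complex.re_sum]
    refine Finset.sum_congr rfl fun i _ => ?_
    simp only [LinearMap.comp_apply]
    rw [← hW (b i), key (W (b i))]
    exact inner_self_eq_norm_sq (𝕜 := ℂ) _
  -- cyclicity: trace (P∘(W∘P)) = trace (W∘P)
  have hcyc : LinearMap.trace ℂ H (P ∘ₗ (W ∘ₗ P)) = LinearMap.trace ℂ H (W ∘ₗ P) := by
    rw [LinearMap.trace_comp_comm', LinearMap.comp_assoc, hP2]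
  set T : ℝ := ∑ i, ‖P (W (b i))‖ * ‖P (b i)‖ with hT
  -- γ S1 ≤ trace(PWP).re = trace(WP).re ≤ T
  have h1 : γ * S1 ≤ T := by
    have hA : γ * S1 ≤ (LinearMap.trace ℂ H (P ∘ₗ (W ∘ₗ P))).re := by
      rw [trace_onb b, Complex.re_sum, hS1, Finset.mul_sum]
      refine Finset.sum_le_sum fun i _ => ?_
      have : ⟪b i, (P ∘ₗ (W ∘ₗ P)) (b i)⟫ = ⟪W (P (b i)), P (b i)⟫ := by
        simp only [LinearMap.comp_apply]
        rw [← hP (b i), ← hW]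
      rw [this]
      exact huncert (b i)
    have hB : (LinearMap.trace ℂ H (W ∘ₗ P)).re ≤ T := by
      rw [trace_onb b, Complex.re_sum, hT]
      refine Finset.sum_le_sum fun i _ => ?_
      have : ⟪b i, (W ∘ₗ P) (b i)⟫ = ⟪P (W (b i)), P (b i)⟫ := by
        simp only [LinearMap.comp_apply]
        rw [← hW (b i), ← hPP (b i), ← hP, hPP]
      rw [this]
      exact re_inner_le_norm (𝕜 := ℂ) _ _
    calc γ * S1 ≤ _ := hA
      _ = _ := by rw [hcyc]
      _ ≤ T := hB
  have h2 : T ^ 2 ≤ S2 * S1 :=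
    Finset.sum_mul_sq_le_sq_mul_sq Finset.univ (fun i => ‖P (W (b i))‖) (fun i => ‖P (b i)‖)
  rw [htrP, htrWPW]
  rcases eq_or_lt_of_le hS1nn with h | h
  · nlinarith [sq_nonneg γ⁻¹]
  · have hTnn : 0 ≤ T := le_trans (by positivity) h1
    have hsq : (γ * S1) ^ 2 ≤ T ^ 2 := pow_le_pow_left₀ (by positivity) h1 2
    have hkey : γ ^ 2 * S1 ≤ S2 := by nlinarith
    rw [inv_pow, ← div_eq_inv_mul, le_div_iff₀ (by positivity : (0:ℝ) < γ ^ 2)]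
    linarith
end

section
/- Let H be a finite-dimensional inner product space, P an orthogonal projection, and W = Σ_{α ∈ F} U_α a finite sum of self-adjoint operators U_α with P W P ≥ γ P for some γ > 0. Fix an orthonormal basis (e_j)_{j ∈ J} and set I_j := {α ∈ F : U_α e_j ≠ 0}, C := max_j |I_j|. Then trace(P) ≤ γ⁻² · C · Σ_{j ∈ J} Σ_{α ∈ I_j} ⟨U_α P U_α e_j, e_j⟩. -/
open LinearMap Classical
noncomputable section
open scoped Classical

local notation "⟪" x ", " y "⟫" => @inner ℂ _ _ x y

lemma trace_eq_sum_inner_aux {H : Type*} [NormedAddCommGroup H] [InnerProductSpace ℂ H]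
    [FiniteDimensional ℂ H] {J : Type*} [Fintype J] (b : OrthonormalBasis J ℂ H)
    (T : H →ₗ[ℂ] H) : LinearMap.trace ℂ H T = ∑ j, ⟪b j, T (b j)⟫ := by
  rw [LinearMap.trace_eq_matrix_trace ℂ b.toBasis, Matrix.trace]
  refine Finset.sum_congr rfl fun j _ => ?_
  rw [Matrix.diag_apply, LinearMap.toMatrix_apply, OrthonormalBasis.coe_toBasis_repr_apply,
    OrthonormalBasis.repr_apply_apply, OrthonormalBasis.coe_toBasis]

theorem trace_proj_le_local_decomposition
    {H : Type*} [NormedAddCommGroup H] [InnerProductSpace ℂ H] [FiniteDimensional ℂ H]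
    {J : Type*} [Fintype J] (b : OrthonormalBasis J ℂ H)
    {ι : Type*} [DecidableEq ι] (F : Finset ι) (U : ι → H →ₗ[ℂ] H)
    (hU : ∀ α ∈ F, (U α).IsSymmetric)
    (P : H →ₗ[ℂ] H) (hP : P.IsSymmetric) (hP2 : P ∘ₗ P = P)
    (γ : ℝ) (hγ : 0 < γ)
    (huncert : ∀ u : H, γ * ‖P u‖ ^ 2 ≤ ((∑ α ∈ F, ⟪(U α) (P u), P u⟫)).re) :
    (LinearMap.trace ℂ H P).re ≤
      γ⁻¹ ^ 2 * (Finset.univ.sup fun j : J => (F.filter fun α => U α (b j) ≠ 0).card : ℕ) *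
        ∑ j : J, ∑ α ∈ F.filter fun α => U α (b j) ≠ 0,
          (⟪(U α) (P ((U α) (b j))), b j⟫).re := by
  have hPP : ∀ x : H, P (P x) = P x := fun x => by
    have := congrArg (fun f : H →ₗ[ℂ] H => f x) hP2; simpa using this
  have hPinner : ∀ x : H, (⟪P x, x⟫ : ℂ) = (‖P x‖ : ℂ) ^ 2 := fun x => by
    rw [← hPP x, hP (P x) x, hPP, inner_self_eq_norm_sq_to_K]
    norm_cast
  -- trace P = ∑ ‖P bj‖²
  have hT : (LinearMap.trace ℂ H P).re = ∑ j, ‖P (b j)‖ ^ 2 := by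
    rw [trace_eq_sum_inner_aux b, Complex.re_sum]
    refine Finset.sum_congr rfl fun j _ => ?_
    rw [← hP (b j) (b j), hPinner (b j)]
    norm_cast
  set Ij : J → Finset ι := fun j => F.filter fun α => U α (b j) ≠ 0 with hIj
  set C : ℕ := Finset.univ.sup fun j : J => (Ij j).card with hC
  set T : ℝ := ∑ j, ‖P (b j)‖ ^ 2 with hTs
  have hT0 : 0 ≤ T := Finset.sum_nonneg fun j _ => sq_nonneg _
  -- Step A: γ T ≤ double sum
  have stepA : γ * T ≤ ∑ j, ∑ α ∈ F, (⟪U α (P (b j)), P (b j)⟫).re := by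
    rw [hTs, Finset.mul_sum]
    refine Finset.sum_le_sum fun j _ => ?_
    simpa [Complex.re_sum] using huncert (b j)
  -- Step B: trace cyclicity per α
  have stepB : ∀ α ∈ F, ∑ j, (⟪U α (P (b j)), P (b j)⟫).re
      = ∑ j, (⟪U α (b j), P (b j)⟫).re := by
    intro α hα
    have h1 : ∑ j, (⟪U α (P (b j)), P (b j)⟫ : ℂ).re
        = (LinearMap.trace ℂ H (P ∘ₗ U α ∘ₗ P)).re := by
      rw [trace_eq_sum_inner_aux b, Complex.re_sum]
      refine Finset.sum_congr rfl fun j _ => ?_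
      have : (⟪U α (P (b j)), P (b j)⟫ : ℂ) = ⟪P (U α (P (b j))), b j⟫ := by
        rw [hP (U α (P (b j))) (b j)]
      rw [this, show (⟪P (U α (P (b j))), b j⟫ : ℂ)
        = (starRingEnd ℂ) ⟪b j, P (U α (P (b j)))⟫ from (inner_conj_symm _ _).symm,
        Complex.conj_re]
      simp [LinearMap.comp_apply]
    have h2 : P ∘ₗ U α ∘ₗ P = (P ∘ₗ U α) ∘ₗ P := by ext x; simp
    have h3 : LinearMap.trace ℂ H (P ∘ₗ U α ∘ₗ P) = LinearMap.trace ℂ H (U α ∘ₗ P) := by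
      rw [h2, LinearMap.trace_comp_comm', ← LinearMap.comp_assoc, hP2,
        LinearMap.trace_comp_comm']
    have h4 : (LinearMap.trace ℂ H (U α ∘ₗ P)).re = ∑ j, (⟪U α (b j), P (b j)⟫).re := by
      rw [trace_eq_sum_inner_aux b, Complex.re_sum]
      refine Finset.sum_congr rfl fun j _ => ?_
      have : (⟪b j, (U α ∘ₗ P) (b j)⟫ : ℂ) = ⟪U α (b j), P (b j)⟫ := by
        simp only [LinearMap.comp_apply]
        rw [← hU α hα (b j) (P (b j))]
      rw [this]
    rw [h1, h3, h4]
  -- Step D/F prep: inner rewrites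
  have hCS : ∀ α ∈ F, ∀ j : J, (⟪U α (b j), P (b j)⟫).re
      ≤ ‖P (U α (b j))‖ * ‖P (b j)‖ := by
    intro α hα j
    have : (⟪U α (b j), P (b j)⟫ : ℂ) = ⟪P (U α (b j)), P (b j)⟫ := by
      rw [hP (U α (b j)) (P (b j)), hPP]
    rw [this]
    calc (⟪P (U α (b j)), P (b j)⟫ : ℂ).re ≤ ‖(⟪P (U α (b j)), P (b j)⟫ : ℂ)‖ :=
          Complex.re_le_norm _
      _ ≤ ‖P (U α (b j))‖ * ‖P (b j)‖ := norm_inner_le_norm _ _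
  have hRHS : ∀ α ∈ F, ∀ j : J, (⟪U α (P (U α (b j))), b j⟫).re = ‖P (U α (b j))‖ ^ 2 := by
    intro α hα j
    rw [hU α hα (P (U α (b j))) (b j), ← inner_conj_symm]
    have : (⟪U α (b j), P (U α (b j))⟫ : ℂ) = (‖P (U α (b j))‖ : ℂ) ^ 2 := by
      rw [← inner_conj_symm, hPinner]
      simp
    rw [this]
    norm_cast
  -- restrict the inner sum to Ij
  have stepC : ∀ j : J, ∑ α ∈ F, (⟪U α (b j), P (b j)⟫).re
      = ∑ α ∈ Ij j, (⟪U α (b j), P (b j)⟫).re := by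
    intro j
    rw [hIj]
    refine (Finset.sum_filter_of_ne fun α hα hne => ?_).symm
    intro h0
    apply hne
    rw [h0]
    simp
  have key : γ * T ≤ ∑ j, ∑ α ∈ Ij j, ‖P (U α (b j))‖ * ‖P (b j)‖ := by
    refine stepA.trans ?_
    calc ∑ j, ∑ α ∈ F, (⟪U α (P (b j)), P (b j)⟫).re
        = ∑ α ∈ F, ∑ j, (⟪U α (P (b j)), P (b j)⟫).re := Finset.sum_comm
      _ = ∑ α ∈ F, ∑ j, (⟪U α (b j), P (b j)⟫).re :=
          Finset.sum_congr rfl fun α hα => stepB α hα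
      _ = ∑ j, ∑ α ∈ F, (⟪U α (b j), P (b j)⟫).re := Finset.sum_comm
      _ = ∑ j, ∑ α ∈ Ij j, (⟪U α (b j), P (b j)⟫).re :=
          Finset.sum_congr rfl fun j _ => stepC j
      _ ≤ ∑ j, ∑ α ∈ Ij j, ‖P (U α (b j))‖ * ‖P (b j)‖ := by
          refine Finset.sum_le_sum fun j _ => Finset.sum_le_sum fun α hα => ?_
          exact hCS α (Finset.mem_filter.mp hα).1 j
  set S : ℝ := ∑ j, ∑ α ∈ Ij j, ‖P (U α (b j))‖ ^ 2 with hSs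
  have hS0 : 0 ≤ S :=
    Finset.sum_nonneg fun j _ => Finset.sum_nonneg fun α _ => sq_nonneg _
  have hRHSeq : ∑ j : J, ∑ α ∈ Ij j, (⟪U α (P (U α (b j))), b j⟫).re = S := by
    refine Finset.sum_congr rfl fun j _ => Finset.sum_congr rfl fun α hα => ?_
    exact hRHS α (Finset.mem_filter.mp hα).1 j
  have h5 : ∑ j, ∑ _α ∈ Ij j, ‖P (b j)‖ ^ 2 ≤ (C : ℝ) * T := by
    rw [hTs, Finset.mul_sum]
    refine Finset.sum_le_sum fun j _ => ?_
    rw [Finset.sum_const, nsmul_eq_mul]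
    have hc : (Ij j).card ≤ C :=
      Finset.le_sup (f := fun j => (Ij j).card) (Finset.mem_univ j)
    exact mul_le_mul_of_nonneg_right (by exact_mod_cast hc) (sq_nonneg _)
  have cs : (∑ j, ∑ α ∈ Ij j, ‖P (U α (b j))‖ * ‖P (b j)‖) ^ 2 ≤ S * ((C : ℝ) * T) := by
    calc (∑ j, ∑ α ∈ Ij j, ‖P (U α (b j))‖ * ‖P (b j)‖) ^ 2
        = (∑ x ∈ Finset.univ.sigma Ij, ‖P (U x.2 (b x.1))‖ * ‖P (b x.1)‖) ^ 2 := by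
          rw [Finset.sum_sigma]
      _ ≤ (∑ x ∈ Finset.univ.sigma Ij, ‖P (U x.2 (b x.1))‖ ^ 2) *
          ∑ x ∈ Finset.univ.sigma Ij, ‖P (b x.1)‖ ^ 2 :=
          Finset.sum_mul_sq_le_sq_mul_sq _ _ _
      _ = S * ∑ j, ∑ _α ∈ Ij j, ‖P (b j)‖ ^ 2 := by
          rw [hSs]; rw [Finset.sum_sigma, Finset.sum_sigma]
      _ ≤ S * ((C : ℝ) * T) := mul_le_mul_of_nonneg_left h5 hS0
  have hM0 : 0 ≤ ∑ j, ∑ α ∈ Ij j, ‖P (U α (b j))‖ * ‖P (b j)‖ :=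
    Finset.sum_nonneg fun j _ => Finset.sum_nonneg fun α _ =>
      mul_nonneg (norm_nonneg _) (norm_nonneg _)
  have h6 : γ ^ 2 * T ^ 2 ≤ S * ((C : ℝ) * T) := by
    have := pow_le_pow_left₀ (mul_nonneg hγ.le hT0) key 2
    nlinarith
  have goal' : T ≤ γ⁻¹ ^ 2 * (C : ℝ) * S := by
    rcases eq_or_lt_of_le hT0 with h | hTpos
    · rw [← h]
      positivity
    · have h7 : γ ^ 2 * T ≤ (C : ℝ) * S := by nlinarith
      calc T = γ⁻¹ ^ 2 * (γ ^ 2 * T) := by field_simp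
        _ ≤ γ⁻¹ ^ 2 * ((C : ℝ) * S) :=
            mul_le_mul_of_nonneg_left h7 (by positivity)
        _ = γ⁻¹ ^ 2 * (C : ℝ) * S := by ring
  rw [hT]
  exact hRHSeq ▸ goal'
end
end
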